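/- For every k ≥ 0, the graph 𝕋̃^k (the complete ternary tree of height k with an extra pendant leaf attached to each of its 3^k original leaves) has pathwidth exactly k + 1. -/

import Mathlib

open SimpleGraph

/-- A path decomposition of a graph `G`: a finite sequence of bags covering all
vertices and edges, in which each vertex occurs in a consecutive set of bags. -/
structure PathDecomp {V : Type*} (G : SimpleGraph V) where
  n : ℕ
  bag : Fin n → Finset V
  mem_bag : ∀ v : V, ∃ i, v ∈ bag i
  adj_bag : ∀ u v : V, G.Adj u v → ∃ i, u ∈ bag i ∧ v ∈ bag i
  convex : ∀ v : V, ∀ i j l : Fin n, i ≤ j → j ≤ l → v ∈ bag i → v ∈ bag l → v ∈ bag j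

/-- The width of a path decomposition: maximum bag size minus one. -/
def PathDecomp.width {V : Type*} {G : SimpleGraph V} (P : PathDecomp G) : ℕ :=
  (Finset.univ.sup fun i => (P.bag i).card) - 1

/-- Pathwidth: the minimum width over all path decompositions. -/
noncomputable def pathwidth {V : Type*} (G : SimpleGraph V) : ℕ :=
  sInf {w | ∃ P : PathDecomp G, P.width = w}


/-- Vertices of the graph `𝕋̃^k`: the complete ternary tree of height `k`
(addresses: lists over `Fin 3` of length ≤ `k`), together with one pendant
vertex per leaf (encoded as the leaf's address extended by `0`). -/
def TildeTVert (k : ℕ) : Type :=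
  {l : List (Fin 3) // l.length ≤ k ∨ (l.length = k + 1 ∧ l.getLast? = some 0)}

/-- The graph `𝕋̃^k`: the complete ternary tree of height `k` with an extra
pendant leaf attached to each of its `3^k` original leaves. Two vertices are
adjacent iff one's address extends the other's by one element. -/
def tildeT (k : ℕ) : SimpleGraph (TildeTVert k) :=
  SimpleGraph.fromRel fun x y => ∃ a : Fin 3, (y.1 : List (Fin 3)) = x.1 ++ [a]

/-!
For the upper bound, order the leaves lexicographically (as base-3 numbers) and let the `i`-th
bag be the path from the root to the `i`-th leaf together with its pendant vertex: `k + 2`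
vertices, and every vertex lies exactly in the bags of the consecutive leaves below it.

The lower bound is by induction on `k`. A path decomposition restricts to each of the three
subtrees below the root, which are copies of `𝕋̃^(k-1)`, so for each child `c` some bag `B c`
contains `k + 1` vertices of subtree `c`. Two of these bags, say `B c₂` and `B c₁`, lie on the
same side of a bag containing the root, with `B c₂` in between. The walk from subtree `c₁` up
to the root then meets `B c₂` in a vertex outside subtree `c₂`, so `B c₂` has `k + 2`
vertices.
-/

namespace PathDecomp

variable {V W : Type*} {G : SimpleGraph V} {H : SimpleGraph W}

theorem card_bag_le_width_add_one (P : PathDecomp G) (i : Fin P.n) :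
    (P.bag i).card ≤ P.width + 1 := by
  have := Finset.le_sup (f := fun i => (P.bag i).card) (Finset.mem_univ i)
  unfold width
  omega

theorem width_le_of_card_bag_le (P : PathDecomp G) {w : ℕ} (h : ∀ i, (P.bag i).card ≤ w + 1) :
    P.width ≤ w := by
  have : (Finset.univ.sup fun i => (P.bag i).card) ≤ w + 1 := Finset.sup_le fun i _ => h i
  unfold width
  omega

theorem one_lt_card_bag_of_adj (P : PathDecomp G) {u v : V} (h : G.Adj u v) :
    ∃ i, 1 < (P.bag i).card := by
  obtain ⟨i, hu, hv⟩ := P.adj_bag u v h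
  exact ⟨i, Finset.one_lt_card.mpr ⟨u, hu, v, hv, h.ne⟩⟩

noncomputable def comap (P : PathDecomp G) (f : H.Copy G) : PathDecomp H where
  n := P.n
  bag i := (P.bag i).preimage f f.injective.injOn
  mem_bag v := by simpa using P.mem_bag (f v)
  adj_bag u v h := by simpa using P.adj_bag _ _ (f.toHom.map_adj h)
  convex v i j l hij hjl := by simpa using P.convex (f v) i j l hij hjl

@[simp]
theorem mem_comap_bag (P : PathDecomp G) (f : H.Copy G) {i : Fin P.n} {v : W} :
    v ∈ (P.comap f).bag i ↔ f v ∈ P.bag i :=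
  Finset.mem_preimage (hf := f.injective.injOn)

theorem exists_mem_support_mem_bag_of_le (P : PathDecomp G) {u v : V} (p : G.Walk u v)
    {i j l : Fin P.n} (hij : i ≤ j) (hjl : j ≤ l) (hu : u ∈ P.bag i) (hv : v ∈ P.bag l) :
    ∃ x ∈ p.support, x ∈ P.bag j := by
  induction p generalizing i with
  | nil => exact ⟨_, by simp, P.convex _ i j l hij hjl hu hv⟩
  | @cons u w v h p ih =>
    obtain ⟨t, hut, hwt⟩ := P.adj_bag _ _ h
    by_cases hjt : j ≤ t
    · exact ⟨u, by simp, P.convex _ i j t hij hjt hu hut⟩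
    · obtain ⟨x, hx, hxj⟩ := ih (le_of_not_ge hjt) hwt hv
      exact ⟨x, by simp [hx], hxj⟩

theorem exists_mem_support_mem_bag (P : PathDecomp G) {u v : V} (p : G.Walk u v)
    {i j l : Fin P.n} (hu : u ∈ P.bag i) (hv : v ∈ P.bag l) (hj : j ∈ Set.uIcc i l) :
    ∃ x ∈ p.support, x ∈ P.bag j := by
  rcases Set.mem_uIcc.mp hj with ⟨hij, hjl⟩ | ⟨hlj, hji⟩
  · exact P.exists_mem_support_mem_bag_of_le p hij hjl hu hv
  · simpa using P.exists_mem_support_mem_bag_of_le p.reverse hlj hji hv hu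

end PathDecomp

theorem pathwidth_le {V : Type*} {G : SimpleGraph V} (P : PathDecomp G) :
    pathwidth G ≤ P.width :=
  Nat.sInf_le ⟨P, rfl⟩

theorem le_pathwidth {V : Type*} {G : SimpleGraph V} [Nonempty (PathDecomp G)] {w : ℕ}
    (h : ∀ P : PathDecomp G, w ≤ P.width) : w ≤ pathwidth G := by
  obtain ⟨P⟩ := ‹Nonempty (PathDecomp G)›
  exact le_csInf ⟨P.width, P, rfl⟩ (by rintro _ ⟨P, rfl⟩; exact h P)

theorem exists_ne_mem_uIcc {ι α : Type*} [Fintype ι] [LinearOrder α]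
    (hι : 2 < Fintype.card ι) (f : ι → α) (m : α) :
    ∃ i j, i ≠ j ∧ f j ∈ Set.uIcc (f i) m := by
  obtain ⟨i, j, hij, hside⟩ :=
    Fintype.exists_ne_map_eq_of_card_lt (fun c => decide (f c ≤ m)) (by simpa using hι)
  simp only [decide_eq_decide] at hside
  simp only [Set.mem_uIcc]
  rcases le_total (f i) (f j) with h | h <;> by_cases hm : f i ≤ m
  · exact ⟨i, j, hij, .inl ⟨h, hside.mp hm⟩⟩
  · exact ⟨j, i, hij.symm, .inr ⟨le_of_not_ge hm, h⟩⟩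
  · exact ⟨j, i, hij.symm, .inl ⟨h, hm⟩⟩
  · exact ⟨i, j, hij, .inr ⟨le_of_not_ge (mt hside.mpr hm), h⟩⟩

theorem Finset.card_preimage_lt {α β : Type*} {f : α → β} (hf : Function.Injective f)
    {s : Finset β} {y : β} (hy : y ∈ s) (hyf : y ∉ Set.range f) :
    (s.preimage f hf.injOn).card < s.card := by
  classical
  rw [Finset.card_preimage]
  exact Finset.card_lt_card (Finset.filter_ssubset.mpr ⟨y, hy, hyf⟩)

section BaseWord

variable {b : ℕ}

/-- The `m`-digit base-`b` expansion of `i` (taken modulo `b ^ m`), most significant digit first. -/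
def baseWord (b : ℕ) [NeZero b] : ℕ → ℕ → List (Fin b)
  | 0, _ => []
  | m + 1, i => baseWord b m (i / b) ++ [Fin.ofNat b i]

def baseVal (l : List (Fin b)) : ℕ := l.foldl (fun n a => b * n + a) 0

theorem baseVal_append_singleton (l : List (Fin b)) (a : Fin b) :
    baseVal (l ++ [a]) = b * baseVal l + a := by
  simp [baseVal, List.foldl_append]

theorem baseVal_lt (l : List (Fin b)) : baseVal l < b ^ l.length := by
  induction l using List.reverseRecOn with
  | nil => simp [baseVal]
  | append_singleton l a ih =>
    rw [baseVal_append_singleton, List.length_append, List.length_singleton, pow_succ]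
    nlinarith [a.2]

variable [NeZero b]

theorem length_baseWord (m i : ℕ) : (baseWord b m i).length = m := by
  induction m generalizing i with
  | zero => rfl
  | succ m ih => simp [baseWord, ih]

theorem baseWord_baseVal (l : List (Fin b)) : baseWord b l.length (baseVal l) = l := by
  induction l using List.reverseRecOn with
  | nil => rfl
  | append_singleton l a ih =>
    have hb : 0 < b := Nat.pos_of_neZero b
    rw [baseVal_append_singleton, List.length_append, List.length_singleton, baseWord,
      Nat.mul_add_div hb, Nat.div_eq_of_lt a.2, add_zero, ih]
    congr
    ext
    simp [Nat.mod_eq_of_lt a.2]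

theorem baseVal_baseWord {m i : ℕ} (hi : i < b ^ m) : baseVal (baseWord b m i) = i := by
  induction m generalizing i with
  | zero => simp_all [baseWord, baseVal]
  | succ m ih =>
    rw [baseWord, baseVal_append_singleton, ih (Nat.div_lt_of_lt_mul (by rwa [← pow_succ'])),
      Fin.val_ofNat, Nat.div_add_mod]

theorem baseWord_add (p q i : ℕ) :
    baseWord b (p + q) i = baseWord b p (i / b ^ q) ++ baseWord b q i := by
  induction q generalizing i with
  | zero => simp [baseWord]
  | succ q ih =>
    rw [← add_assoc, baseWord, ih, baseWord, Nat.div_div_eq_div_mul, ← pow_succ']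
    simp

theorem prefix_baseWord_iff {l : List (Fin b)} {n i : ℕ} (hl : l.length ≤ n) (hi : i < b ^ n) :
    l <+: baseWord b n i ↔ i / b ^ (n - l.length) = baseVal l := by
  have hq : i / b ^ (n - l.length) < b ^ l.length :=
    Nat.div_lt_of_lt_mul (by rwa [← pow_add, Nat.sub_add_cancel hl])
  rw [← Nat.add_sub_cancel' hl, baseWord_add, Nat.add_sub_cancel_left, List.prefix_iff_eq_take,
    List.take_left' (length_baseWord _ _)]
  constructor
  · intro h
    simpa [baseVal_baseWord hq] using (congrArg baseVal h).symm
  · intro h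
    rw [h, baseWord_baseVal]

theorem prefix_baseWord_of_le_of_le {l : List (Fin b)} {n i j k : ℕ} (hl : l.length ≤ n)
    (hk : k < b ^ n) (hij : i ≤ j) (hjk : j ≤ k) (hli : l <+: baseWord b n i)
    (hlk : l <+: baseWord b n k) : l <+: baseWord b n j := by
  rw [prefix_baseWord_iff hl (by omega)] at hli ⊢
  rw [prefix_baseWord_iff hl hk] at hlk
  have := Nat.div_le_div_right (c := b ^ (n - l.length)) hij
  have := Nat.div_le_div_right (c := b ^ (n - l.length)) hjk
  omega

end BaseWord

theorem tildeT_adj_iff {k : ℕ} {u v : TildeTVert k} :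
    (tildeT k).Adj u v ↔ (∃ a, v.1 = u.1 ++ [a]) ∨ ∃ a, u.1 = v.1 ++ [a] := by
  refine ⟨fun h => h.2, fun h => ⟨?_, h⟩⟩
  rintro rfl
  rcases h with ⟨a, h⟩ | ⟨a, h⟩ <;> simpa using congrArg List.length h

namespace TildeTVert

variable {k : ℕ}

theorem length_le (v : TildeTVert k) : v.1.length ≤ k + 1 := by
  rcases v.2 with h | h <;> omega

def root : TildeTVert k := ⟨[], Or.inl (Nat.zero_le k)⟩

theorem exists_leaf (v : TildeTVert k) :
    ∃ l : List (Fin 3), l.length = k ∧ v.1 <+: l ++ [0] := by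
  rcases v.2 with h | ⟨h, hlast⟩
  · refine ⟨v.1 ++ List.replicate (k - v.1.length) 0, by simp; omega, ?_⟩
    rw [List.append_assoc]
    exact List.prefix_append _ _
  · refine ⟨v.1.dropLast, by simp [h], ?_⟩
    rw [List.dropLast_append_getLast? 0 hlast]

theorem exists_walk_root (v : TildeTVert k) :
    ∃ p : (tildeT k).Walk v root, ∀ x ∈ p.support, x.1 <+: v.1 := by
  obtain ⟨l, hl⟩ := v
  induction l using List.reverseRecOn with
  | nil =>
    refine ⟨.nil, fun x hx => ?_⟩
    rw [List.mem_singleton.mp hx]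
  | append_singleton l a ih =>
    have hlk : l.length ≤ k := by rcases hl with h | ⟨h, -⟩ <;> simp at h <;> omega
    obtain ⟨p, hp⟩ := ih (Or.inl hlk)
    refine ⟨.cons (tildeT_adj_iff.mpr (.inr ⟨a, rfl⟩)) p, ?_⟩
    intro x hx
    rcases List.mem_cons.mp hx with rfl | hx
    · exact List.prefix_refl _
    · exact (hp x hx).trans (List.prefix_append _ _)

def cons (c : Fin 3) (v : TildeTVert k) : TildeTVert (k + 1) :=
  ⟨c :: v.1, by
    rcases v.2 with h | ⟨h, hlast⟩
    · exact .inl (by simpa using h)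
    · refine .inr ⟨by simpa using h, ?_⟩
      rw [List.getLast?_cons, hlast]
      rfl⟩

theorem cons_injective (c : Fin 3) : Function.Injective (cons (k := k) c) :=
  fun _ _ h => Subtype.ext (List.cons_injective (congrArg Subtype.val h))

end TildeTVert

def subtreeCopy (k : ℕ) (c : Fin 3) : (tildeT k).Copy (tildeT (k + 1)) :=
  SimpleGraph.Hom.toCopy ⟨TildeTVert.cons c, fun h => by
    rcases tildeT_adj_iff.mp h with ⟨a, ha⟩ | ⟨a, ha⟩
    · exact tildeT_adj_iff.mpr (.inl ⟨a, congrArg (c :: ·) ha⟩)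
    · exact tildeT_adj_iff.mpr (.inr ⟨a, congrArg (c :: ·) ha⟩)⟩
  (TildeTVert.cons_injective c)

/-- The ancestors of the `i`-th leaf together with its pendant vertex, whose address is the
`(k + 1)`-digit expansion of `3 * i`. -/
def leafBag (k i : ℕ) : Finset (TildeTVert k) :=
  (baseWord 3 (k + 1) (3 * i)).inits.toFinset.subtype _

theorem mem_leafBag {k i : ℕ} {v : TildeTVert k} :
    v ∈ leafBag k i ↔ v.1 <+: baseWord 3 (k + 1) (3 * i) :=
  Finset.mem_subtype.trans (List.mem_toFinset.trans (List.mem_inits _ _))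

theorem card_leafBag_le (k i : ℕ) : (leafBag k i).card ≤ k + 2 :=
  calc (leafBag k i).card ≤ (baseWord 3 (k + 1) (3 * i)).inits.toFinset.card :=
        (Finset.card_subtype _ _).trans_le (Finset.card_filter_le _ _)
    _ ≤ k + 2 := by
        simpa [length_baseWord] using List.toFinset_card_le (baseWord 3 (k + 1) (3 * i)).inits

theorem exists_mem_leafBag {k : ℕ} (v : TildeTVert k) : ∃ i < 3 ^ k, v ∈ leafBag k i := by
  obtain ⟨l, hl, hv⟩ := v.exists_leaf
  refine ⟨baseVal l, hl ▸ baseVal_lt l, mem_leafBag.mpr ?_⟩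
  have := baseWord_baseVal (l ++ [0])
  rw [baseVal_append_singleton, List.length_append, List.length_singleton, hl, Fin.val_zero,
    add_zero] at this
  exact this ▸ hv

theorem mem_leafBag_of_prefix {k i : ℕ} {u v : TildeTVert k} (huv : u.1 <+: v.1)
    (hv : v ∈ leafBag k i) : u ∈ leafBag k i :=
  mem_leafBag.mpr (huv.trans (mem_leafBag.mp hv))

def leafPathDecomp (k : ℕ) : PathDecomp (tildeT k) where
  n := 3 ^ k
  bag i := leafBag k i
  mem_bag v := by
    obtain ⟨i, hi, hv⟩ := exists_mem_leafBag v
    exact ⟨⟨i, hi⟩, hv⟩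
  adj_bag u v h := by
    rcases tildeT_adj_iff.mp h with ⟨a, ha⟩ | ⟨a, ha⟩
    · obtain ⟨i, hi, hv⟩ := exists_mem_leafBag v
      exact ⟨⟨i, hi⟩, mem_leafBag_of_prefix (ha ▸ List.prefix_append _ _) hv, hv⟩
    · obtain ⟨i, hi, hu⟩ := exists_mem_leafBag u
      exact ⟨⟨i, hi⟩, hu, mem_leafBag_of_prefix (ha ▸ List.prefix_append _ _) hu⟩
  convex v i j l hij hjl hi hl := by
    rw [mem_leafBag] at *
    exact prefix_baseWord_of_le_of_le v.length_le (by omega) (by omega) (by omega) hi hl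

theorem width_leafPathDecomp_le (k : ℕ) : (leafPathDecomp k).width ≤ k + 1 :=
  (leafPathDecomp k).width_le_of_card_bag_le fun i => card_leafBag_le k i

theorem tildeT_exists_le_card_bag :
    ∀ (k : ℕ) (P : PathDecomp (tildeT k)), ∃ i, k + 2 ≤ (P.bag i).card
  | 0, P => P.one_lt_card_bag_of_adj (u := TildeTVert.root) (v := ⟨[0], .inr ⟨rfl, rfl⟩⟩)
      (tildeT_adj_iff.mpr (.inl ⟨0, rfl⟩))
  | k + 1, P => by
    choose idx hidx using fun c => tildeT_exists_le_card_bag k (P.comap (subtreeCopy k c))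
    obtain ⟨m, hm⟩ := P.mem_bag TildeTVert.root
    obtain ⟨c₁, c₂, hc, hbtw⟩ := exists_ne_mem_uIcc (by simp) idx m
    obtain ⟨u, hu⟩ : ((P.comap (subtreeCopy k c₁)).bag (idx c₁)).Nonempty :=
      Finset.card_pos.mp (by have := hidx c₁; omega)
    obtain ⟨p, hp⟩ := (subtreeCopy k c₁ u).exists_walk_root
    -- The walk stays in the subtree of `c₁` plus the root, so it misses the subtree of `c₂`.
    obtain ⟨y, hyp, hy⟩ := P.exists_mem_support_mem_bag p (P.mem_comap_bag _ |>.mp hu) hm hbtw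
    have hyc : y ∉ Set.range (subtreeCopy k c₂) := by
      rintro ⟨z, rfl⟩
      exact hc (List.cons_prefix_cons.mp (hp _ hyp)).1.symm
    exact ⟨idx c₂,
      (hidx c₂).trans_lt (Finset.card_preimage_lt (subtreeCopy k c₂).injective hy hyc)⟩

/-- For every `k ≥ 0`, `𝕋̃^k` has pathwidth exactly `k + 1`. -/
theorem pathwidth_tildeT (k : ℕ) : pathwidth (tildeT k) = k + 1 := by
  have : Nonempty (PathDecomp (tildeT k)) := ⟨leafPathDecomp k⟩
  refine le_antisymm ((pathwidth_le _).trans (width_leafPathDecomp_le k)) (le_pathwidth fun P => ?_)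
  obtain ⟨i, hi⟩ := tildeT_exists_le_card_bag k P
  have := P.card_bag_le_width_add_one i
  omega
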